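/- arXiv:1705.01184 — 2 statements merged into one kernel-verified Lean document; each statement's English description precedes it below -/
import Mathlib

section
/- Let F : ℂ → ℂ be defined by F(z) = ((i+1)z² + (i−1)) / ((i−1)z² + (i+1)). Then the denominator (i−1)z² + (i+1) is nonzero at each of the points 0, 1, −1, i, −i, and F(0) = i, F(1) = 1, F(−1) = 1, F(i) = −1, F(−i) = −1, and F(z) tends to −i as z tends to infinity. Consequently the set {1, −1, i, −i} is mapped into itself by F, the critical orbit portrait is 0 ↦ i ↦ −1 ↦ 1 ↦ 1 and ∞ ↦ −i ↦ −1, and the third iterate F∘F∘F sends each of the points 0, 1, −1, i, −i to the fixed point 1. Hence F is postcritically finite with postcritical set contained in {1, −1, i, −i}. -/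
open Complex

/-- The rational map Thurston-equivalent to the topological self-mating of `f_{1/4}`
(Milnor's example): `F(z) = ((i+1)z² + (i−1)) / ((i−1)z² + (i+1))`. -/
noncomputable def Fquarter (z : ℂ) : ℂ :=
  ((Complex.I + 1) * z ^ 2 + (Complex.I - 1)) / ((Complex.I - 1) * z ^ 2 + (Complex.I + 1))

/-!
`F` is the Möbius map `w ↦ ((i+1)w + (i−1)) / ((i−1)w + (i+1))` applied to `w = z²`, so it is
even and its values at `0, ±1, ±i, ∞` are those of the Möbius map at `w = 0, 1, −1, ∞`,
namely `i, 1, −1, −i`; the orbit portrait is read off from these four values.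
-/

open Filter Topology Bornology

theorem tendsto_linear_div_linear_cobounded {𝕜 : Type*} [NormedField 𝕜] {a b c d : 𝕜}
    (hc : c ≠ 0) :
    Tendsto (fun w ↦ (a * w + b) / (c * w + d)) (cobounded 𝕜) (𝓝 (a / c)) := by
  have hcont : ContinuousAt (fun u : 𝕜 ↦ (a + b * u) / (c + d * u)) 0 :=
    (continuousAt_const.add (continuousAt_const.mul continuousAt_id)).div
      (continuousAt_const.add (continuousAt_const.mul continuousAt_id)) (by simpa using hc)
  have hlim := hcont.tendsto.comp (tendsto_inv₀_cobounded (α := 𝕜))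
  simp only [mul_zero, add_zero] at hlim
  refine hlim.congr' ?_
  filter_upwards [eventually_ne_cobounded (0 : 𝕜)] with w hw
  rw [Function.comp_apply, ← mul_div_mul_right _ _ hw]
  congr 1 <;> field_simp

theorem Fquarter_neg (z : ℂ) : Fquarter (-z) = Fquarter z := by
  simp only [Fquarter, neg_sq]

theorem Fquarter_zero : Fquarter 0 = I := by
  rw [Fquarter, div_eq_iff (by simp [Complex.ext_iff])]
  linear_combination -I_sq

theorem Fquarter_one : Fquarter 1 = 1 := by
  rw [Fquarter, div_eq_iff (by simp [Complex.ext_iff])]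
  ring

theorem Fquarter_I : Fquarter I = -1 := by
  rw [Fquarter, div_eq_iff (by simp [Complex.ext_iff])]
  linear_combination 2 * I * I_sq

theorem tendsto_Fquarter_cobounded : Tendsto Fquarter (cobounded ℂ) (𝓝 (-I)) := by
  have hlim : (I + 1) / (I - 1) = -I := by
    rw [div_eq_iff (by simp [Complex.ext_iff])]
    linear_combination I_sq
  rw [← hlim]
  exact (tendsto_linear_div_linear_cobounded (by simp [Complex.ext_iff])).comp
    (tendsto_pow_cobounded_cobounded two_ne_zero)

theorem stmt_10 :
    ((Complex.I - 1) * (0 : ℂ) ^ 2 + (Complex.I + 1) ≠ 0) ∧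
    ((Complex.I - 1) * (1 : ℂ) ^ 2 + (Complex.I + 1) ≠ 0) ∧
    ((Complex.I - 1) * (-1 : ℂ) ^ 2 + (Complex.I + 1) ≠ 0) ∧
    ((Complex.I - 1) * Complex.I ^ 2 + (Complex.I + 1) ≠ 0) ∧
    ((Complex.I - 1) * (-Complex.I) ^ 2 + (Complex.I + 1) ≠ 0) ∧
    Fquarter 0 = Complex.I ∧
    Fquarter 1 = 1 ∧
    Fquarter (-1) = 1 ∧
    Fquarter Complex.I = -1 ∧
    Fquarter (-Complex.I) = -1 ∧
    Filter.Tendsto Fquarter (Bornology.cobounded ℂ) (nhds (-Complex.I)) ∧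
    Set.MapsTo Fquarter {1, -1, Complex.I, -Complex.I} {1, -1, Complex.I, -Complex.I} ∧
    (∀ z ∈ ({0, 1, -1, Complex.I, -Complex.I} : Set ℂ),
      (Fquarter ∘ Fquarter ∘ Fquarter) z = 1) := by
  refine ⟨by simp [Complex.ext_iff], by simp [Complex.ext_iff], by simp [Complex.ext_iff],
    by simp [Complex.ext_iff], by simp [Complex.ext_iff], Fquarter_zero, Fquarter_one,
    by rw [Fquarter_neg, Fquarter_one], Fquarter_I, by rw [Fquarter_neg, Fquarter_I],
    tendsto_Fquarter_cobounded, ?_, ?_⟩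
  · rintro z (rfl | rfl | rfl | rfl) <;> simp [Fquarter_neg, Fquarter_one, Fquarter_I]
  · rintro z (rfl | rfl | rfl | rfl | rfl) <;>
      simp [Fquarter_neg, Fquarter_zero, Fquarter_one, Fquarter_I]
end

section
/- Let F : ℂ → ℂ be defined by F(z) = ((i+1)z² + (i−1)) / ((i−1)z² + (i+1)). Then the set {z ∈ ℂ : (i−1)z² + (i+1) ≠ 0 and F(z) ∈ {1, −1, i, −i}} equals {0, 1, −1, i, −i}. That is, the full finite preimage of the postcritical set {1, −1, i, −i} under F consists of the postcritical points together with the finite critical point 0; this is the computation showing that the pullback step of the algorithm does not change the embedding of the postcritical set, so the initial embedding represents the fixed point of the Thurston pullback map for this mating. -/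
private lemma denom_eval (z : ℂ) (hz : z ^ 2 = 1 ∨ z ^ 2 = -1 ∨ z ^ 2 = 0) :
    (Complex.I - 1) * z ^ 2 + (Complex.I + 1) ≠ 0 := by
  rcases hz with h | h | h <;> rw [h] <;> intro hc <;>
    simp only [Complex.ext_iff, Complex.add_re, Complex.add_im, Complex.mul_re,
      Complex.mul_im, Complex.sub_re, Complex.sub_im, Complex.I_re, Complex.I_im,
      Complex.one_re, Complex.one_im, Complex.neg_re, Complex.neg_im,
      Complex.zero_re, Complex.zero_im] at hc <;> norm_num at hc

theorem stmt_11 :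
    {z : ℂ | (Complex.I - 1) * z ^ 2 + (Complex.I + 1) ≠ 0 ∧
        Fquarter z ∈ ({1, -1, Complex.I, -Complex.I} : Set ℂ)} =
      {0, 1, -1, Complex.I, -Complex.I} := by
  have hI : Complex.I ^ 2 = -1 := Complex.I_sq
  ext z
  simp only [Set.mem_setOf_eq, Set.mem_insert_iff, Set.mem_singleton_iff, Fquarter]
  constructor
  · rintro ⟨hd, h | h | h | h⟩ <;> rw [div_eq_iff hd] at h
    · -- F z = 1 : z = ±1
      have h2 : (z - 1) * (z + 1) = 0 := by linear_combination h / 2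
      rcases mul_eq_zero.1 h2 with h3 | h3
      · right; left; linear_combination h3
      · right; right; left; linear_combination h3
    · -- F z = -1 : z = ±i
      have h2 : (z - Complex.I) * (z + Complex.I) = 0 := by
        linear_combination (-Complex.I / 2) * h + z ^ 2 * hI
      rcases mul_eq_zero.1 h2 with h3 | h3
      · right; right; right; left; linear_combination h3
      · right; right; right; right; linear_combination h3
    · -- F z = i : z = 0
      have h2 : z ^ 2 = 0 := by
        linear_combination ((1 - Complex.I) / 4) * h +
          ((z ^ 2 * (3 - Complex.I) + (1 - Complex.I)) / 4) * hI
      left; exact pow_eq_zero_iff (by norm_num) |>.1 h2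
    · -- F z = -i : impossible
      exfalso
      have h2 : (2 : ℂ) * Complex.I - 2 = 0 := by
        linear_combination h - (1 + z ^ 2) * hI
      have h3 : Complex.I = 1 := by linear_combination h2 / 2
      have := congrArg Complex.re h3
      simp at this
  · rintro (rfl | rfl | rfl | rfl | rfl)
    · refine ⟨denom_eval 0 (by norm_num), Or.inr (Or.inr (Or.inl ?_))⟩
      rw [div_eq_iff (denom_eval 0 (by norm_num))]; linear_combination -hI
    · refine ⟨denom_eval 1 (by norm_num), Or.inl ?_⟩
      rw [div_eq_iff (denom_eval 1 (by norm_num))]; ring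
    · refine ⟨denom_eval (-1) (by norm_num), Or.inl ?_⟩
      rw [div_eq_iff (denom_eval (-1) (by norm_num))]; ring
    · refine ⟨denom_eval Complex.I (Or.inr (Or.inl hI)), Or.inr (Or.inl ?_)⟩
      rw [div_eq_iff (denom_eval Complex.I (Or.inr (Or.inl hI)))]
      linear_combination 2 * Complex.I * hI
    · refine ⟨denom_eval (-Complex.I) (Or.inr (Or.inl (by linear_combination hI))),
        Or.inr (Or.inl ?_)⟩
      rw [div_eq_iff (denom_eval (-Complex.I) (Or.inr (Or.inl (by linear_combination hI))))]
      linear_combination 2 * Complex.I * hI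
end
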